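/- arXiv:2302.01911 — 3 statements merged into one kernel-verified Lean document; each statement's English description precedes it below -/
import Mathlib

section
/- For every positive integer n and every real x, the n-th derivative of the arctangent function satisfies dⁿ/dxⁿ arctan(x) = sgn(−x)^(n−1) · (n−1)! / (1+x²)^(n/2) · sin( n · arcsin( 1/√(1+x²) ) ), where sgn(y) = −1 if y < 0 and sgn(y) = 1 if y ≥ 0. -/
/-- The modified signum function: `-1` for negative inputs, `1` otherwise. -/
noncomputable def sgn (y : ℝ) : ℝ := if y < 0 then -1 else 1

/-!
Put `θ = arccot x = π/2 - arctan x ∈ (0, π)`. Then `sin θ = (1 + x²)^(-1/2)` and `θ' = -sin² θ`, so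
the addition formula for `sin` gives `(sinⁿ θ · sin nθ)' = -n sinⁿ⁺¹ θ · sin (n+1)θ`, and by induction
`arctan⁽ⁿ⁾ x = (-1)ⁿ⁻¹ (n-1)! sinⁿ θ · sin nθ`. Finally `arcsin (sin θ)` is `θ` for `x > 0` and
`π - θ` for `x ≤ 0`, where `sin (n(π - θ)) = (-1)ⁿ⁻¹ sin nθ` absorbs the sign.
-/

open Real
open scoped Nat

noncomputable def arccot (x : ℝ) : ℝ := π / 2 - arctan x

lemma sin_arccot (x : ℝ) : sin (arccot x) = 1 / √(1 + x ^ 2) := by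
  rw [arccot, sin_pi_div_two_sub, cos_arctan]

lemma sin_arccot_pow (x : ℝ) (n : ℕ) :
    sin (arccot x) ^ n = 1 / (1 + x ^ 2) ^ ((n : ℝ) / 2) := by
  rw [sin_arccot, div_pow, one_pow, sqrt_eq_rpow, ← rpow_natCast, ← rpow_mul (by positivity),
    one_div_mul_eq_div]

lemma sin_arccot_sq (x : ℝ) : sin (arccot x) ^ 2 = 1 / (1 + x ^ 2) := by
  rw [sin_arccot, div_pow, one_pow, sq_sqrt (by positivity)]

lemma hasDerivAt_arccot (x : ℝ) : HasDerivAt arccot (-sin (arccot x) ^ 2) x := by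
  rw [sin_arccot_sq]
  exact (hasDerivAt_arctan x).const_sub (π / 2)

lemma arccot_mem_Ioo (x : ℝ) : arccot x ∈ Set.Ioo 0 π := by
  have := neg_pi_div_two_lt_arctan x
  have := arctan_lt_pi_div_two x
  constructor <;> unfold arccot <;> linarith

lemma hasDerivAt_sin_pow_mul_sin_mul {θ : ℝ → ℝ} {x : ℝ} (hθ : HasDerivAt θ (-sin (θ x) ^ 2) x)
    (n : ℕ) :
    HasDerivAt (fun y => sin (θ y) ^ n * sin (n * θ y))
      (-(n * (sin (θ x) ^ (n + 1) * sin ((n + 1 : ℕ) * θ x)))) x := by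
  have hsin := (hθ.sin.fun_pow n).fun_mul (hθ.const_mul (n : ℝ)).sin
  refine hsin.congr_deriv ?_
  rw [Nat.cast_succ, add_one_mul, sin_add]
  cases n with
  | zero => simp
  | succ n => simp only [pow_succ, Nat.add_sub_cancel]; ring

theorem iteratedDeriv_succ_arctan (n : ℕ) :
    iteratedDeriv (n + 1) arctan =
      fun x => (-1) ^ n * (n ! : ℝ) *
        (sin (arccot x) ^ (n + 1) * sin ((n + 1 : ℕ) * arccot x)) := by
  induction n with
  | zero =>
    ext x
    simp [Real.deriv_arctan, ← sq, sin_arccot_sq]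
  | succ n ih =>
    ext x
    rw [iteratedDeriv_succ, ih,
      ((hasDerivAt_sin_pow_mul_sin_mul (hasDerivAt_arccot x) (n + 1)).const_mul _).deriv]
    push_cast [Nat.factorial_succ]
    ring

lemma arcsin_sin_arccot_of_pos {x : ℝ} (hx : 0 < x) : arcsin (sin (arccot x)) = arccot x :=
  arcsin_sin (by linarith [pi_pos, (arccot_mem_Ioo x).1]) (sub_le_self _ (arctan_pos.mpr hx).le)

lemma arcsin_sin_arccot_of_nonpos {x : ℝ} (hx : x ≤ 0) :
    arcsin (sin (arccot x)) = π - arccot x := by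
  rw [← sin_pi_sub]
  exact arcsin_sin (by linarith [pi_pos, (arccot_mem_Ioo x).2])
    (by rw [arccot]; linarith [arctan_le_zero.mpr hx])

lemma neg_one_pow_mul_sin_mul_arccot (n : ℕ) (x : ℝ) :
    (-1) ^ n * sin ((n + 1 : ℕ) * arccot x) =
      sgn (-x) ^ n * sin ((n + 1 : ℕ) * arcsin (sin (arccot x))) := by
  rcases lt_or_ge 0 x with hx | hx
  · rw [arcsin_sin_arccot_of_pos hx, sgn, if_pos (neg_lt_zero.mpr hx)]
  · rw [arcsin_sin_arccot_of_nonpos hx, sgn, if_neg (by linarith), mul_sub, sin_nat_mul_pi_sub]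
    ring

theorem arctan_iteratedDeriv_sgn (n : ℕ) (hn : 0 < n) (x : ℝ) :
    iteratedDeriv n Real.arctan x =
      sgn (-x) ^ (n - 1) * (Nat.factorial (n - 1) : ℝ) / (1 + x ^ 2) ^ ((n : ℝ) / 2) *
        Real.sin (n * Real.arcsin (1 / Real.sqrt (1 + x ^ 2))) := by
  obtain ⟨k, rfl⟩ : ∃ k, n = k + 1 := ⟨n - 1, by omega⟩
  rw [iteratedDeriv_succ_arctan, Nat.add_sub_cancel, ← sin_arccot]
  beta_reduce
  rw [sin_arccot_pow]
  linear_combination (k ! / (1 + x ^ 2) ^ (((k + 1 : ℕ) : ℝ) / 2)) *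
    neg_one_pow_mul_sin_mul_arccot k x
end

section
/- The iterated series ∑_{m=1}^∞ ∑_{n=1}^{2m−1} (−4)^(n−1) / ( (2m−1) · 5^(2m−1) ) · C(2m−1, 2n−1) converges and its sum equals π/16, where C(a,b) denotes the binomial coefficient. -/
/-!
By the binomial theorem the inner sum is `Im ((1 + 2i) ^ (2m+1)) / 2`, so with `w = (1 + 2i) / 5`
the series is `½ ∑ Im (w ^ (2m+1)) / (2m+1) = ½ Im (artanh w)`, where
`artanh w = i arctan (-i w)`. Since `|w| < 1` the power series
converges, and `artanh w = ½ log ((1 + w) / (1 - w)) = ½ log (1 + i)`, whose imaginary part is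
`½ arg (1 + i) = π / 8`.
-/

open Complex Finset

theorem Finset.sum_range_two_mul {M : Type*} [AddCommMonoid M] (f : ℕ → M) (n : ℕ) :
    ∑ k ∈ range (2 * n), f k = ∑ j ∈ range n, (f (2 * j) + f (2 * j + 1)) := by
  induction n with
  | zero => simp
  | succ n ih => rw [Nat.mul_succ, sum_range_succ, sum_range_succ, sum_range_succ, ih, add_assoc]

namespace Complex

theorem I_pow_two_mul_im (j : ℕ) : (I ^ (2 * j)).im = 0 := by
  rw [pow_mul, I_sq]
  exact_mod_cast ofReal_im ((-1) ^ j)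

theorem I_pow_two_mul_add_one_im (j : ℕ) : (I ^ (2 * j + 1)).im = (-1) ^ j := by
  rw [pow_succ, pow_mul, I_sq, mul_I_im]
  exact_mod_cast ofReal_re ((-1) ^ j)

theorem im_one_add_mul_I_pow (x : ℝ) (N : ℕ) :
    ((1 + x * I) ^ N).im = ∑ j ∈ range N, (-1) ^ j * x ^ (2 * j + 1) * N.choose (2 * j + 1) := by
  set f : ℕ → ℝ := fun k => x ^ k * (I ^ k).im * N.choose k
  have hf_zero : ∀ k, N < k → f k = 0 := fun k hk => by simp [f, Nat.choose_eq_zero_of_lt hk]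
  calc ((1 + x * I) ^ N).im = ∑ k ∈ range (N + 1), f k := by
        rw [add_comm, add_pow, im_sum]
        refine sum_congr rfl fun k _ => ?_
        rw [one_pow, mul_one, mul_pow, ← ofReal_pow, ← ofReal_natCast, im_mul_ofReal,
          im_ofReal_mul]
    _ = ∑ k ∈ range (2 * (N + 1)), f k :=
        sum_subset (range_subset_range.mpr (by omega)) fun k _ hk => hf_zero k (by simpa using hk)
    _ = ∑ j ∈ range (N + 1), (-1) ^ j * x ^ (2 * j + 1) * N.choose (2 * j + 1) := by
        rw [sum_range_two_mul]
        refine sum_congr rfl fun j _ => ?_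
        simp only [f, I_pow_two_mul_im, I_pow_two_mul_add_one_im]
        ring
    _ = _ := by
        rw [sum_range_succ, Nat.choose_eq_zero_of_lt (by omega : N < 2 * N + 1), Nat.cast_zero,
          mul_zero, add_zero]

theorem hasSum_im_pow_two_mul_add_one_div {w : ℂ} (hw : ‖w‖ < 1) :
    HasSum (fun m : ℕ => (w ^ (2 * m + 1)).im / (2 * m + 1)) (arg ((1 + w) / (1 - w)) / 2) := by
  have h := (hasSum_arctan (z := -I * w) (by simpa using hw)).mapL reCLM
  have hw' : -I * w * I = w := by rw [mul_right_comm, neg_mul, I_mul_I, neg_neg, one_mul]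
  convert h using 1
  · funext m
    have hI : (-1) ^ m * (-I) ^ (2 * m + 1) = -I := by
      rw [pow_succ, pow_mul, neg_sq, I_sq, ← mul_assoc, ← mul_pow, neg_one_mul, neg_neg, one_pow,
        one_mul]
    rw [reCLM_apply, mul_pow, ← mul_assoc, hI, neg_mul, neg_div, neg_re, mul_div_assoc, I_mul_re,
      neg_neg, div_natCast_im]
    push_cast
    rfl
  · rw [reCLM_apply, arctan, hw', neg_div, neg_mul, neg_re, div_mul_eq_mul_div, div_ofNat_re,
      I_mul_re, log_im, neg_div, neg_neg]

theorem arg_one_add_I : arg (1 + I) = Real.pi / 4 := by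
  have h : ((Real.sqrt 2 / 2 : ℝ) : ℂ) * (1 + I) =
      Real.cos (Real.pi / 4) + Real.sin (Real.pi / 4) * I := by
    rw [Real.cos_pi_div_four, Real.sin_pi_div_four]
    push_cast
    ring
  rw [← arg_real_mul _ (by positivity : (0 : ℝ) < Real.sqrt 2 / 2), h, ofReal_cos, ofReal_sin]
  exact arg_cos_add_sin_mul_I ⟨by linarith [Real.pi_pos], by linarith [Real.pi_pos]⟩

end Complex

theorem sum_Icc_neg_four_pow_mul_choose (N : ℕ) :
    ∑ n ∈ Icc 1 N, (-4 : ℝ) ^ (n - 1) * N.choose (2 * n - 1) = ((1 + 2 * I) ^ N).im / 2 := by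
  have h := im_one_add_mul_I_pow 2 N
  push_cast at h
  rw [h, ← Ico_add_one_right_eq_Icc, sum_Ico_eq_sum_range, Nat.add_sub_cancel, sum_div]
  refine sum_congr rfl fun j _ => ?_
  rw [show 1 + j - 1 = j by omega, show 2 * (1 + j) - 1 = 2 * j + 1 by omega, pow_succ, pow_mul,
    show (-4 : ℝ) = -1 * 2 ^ 2 by norm_num, mul_pow]
  ring

theorem pi_div_sixteen_binomial_series :
    HasSum (fun m : ℕ =>
      ∑ n ∈ Finset.Icc 1 (2 * m + 1),
        (-4 : ℝ) ^ (n - 1) / ((2 * (m : ℝ) + 1) * 5 ^ (2 * m + 1)) *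
          (Nat.choose (2 * m + 1) (2 * n - 1) : ℝ))
      (Real.pi / 16) := by
  set w : ℂ := (1 + 2 * I) / 5 with hw_def
  have hw : ‖w‖ < 1 := by
    rw [← sq_lt_one_iff₀ (norm_nonneg _), ← normSq_eq_norm_sq]
    norm_num [w, normSq_apply]
  have hw_ratio : (1 + w) / (1 - w) = 1 + I := by
    rw [div_eq_iff fun h0 => by simpa [hw_def] using congrArg im h0, hw_def]
    linear_combination (2 / 5 : ℂ) * I_sq
  have h := (hasSum_im_pow_two_mul_add_one_div hw).div_const 2
  rw [hw_ratio, arg_one_add_I, show Real.pi / 4 / 2 / 2 = Real.pi / 16 by ring] at h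
  refine h.congr_fun fun m => ?_
  have hw_pow : (w ^ (2 * m + 1)).im = ((1 + 2 * I) ^ (2 * m + 1)).im / 5 ^ (2 * m + 1) := by
    rw [div_pow, show (5 : ℂ) ^ (2 * m + 1) = ((5 ^ (2 * m + 1) : ℝ) : ℂ) by push_cast; rfl,
      div_ofReal_im]
  simp_rw [div_mul_eq_mul_div, ← sum_div]
  rw [sum_Icc_neg_four_pow_mul_choose, hw_pow]
  field_simp
end

section
/- Let x be a nonzero real number and define real sequences g_n(x), h_n(x) by g_1(x) = 2/x, h_1(x) = 1, and for n ≥ 2: g_n(x) = g_{n−1}(x)(1 − 4/x²) + 4h_{n−1}(x)/x and h_n(x) = h_{n−1}(x)(1 − 4/x²) − 4g_{n−1}(x)/x. Then the series 2 ∑_{n=1}^∞ (1/(2n−1)) · g_n(x) / ( g_n(x)² + h_n(x)² ) converges and its sum equals arctan(x). -/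
/-!
With `w = 1 - 2i/x`, the recursion is multiplication by `w² = (1 - 4/x²) - (4/x) i`, so
`g_n + i h_n = i w^{2n-1}` and `g_n / (g_n² + h_n²) = Re (g_n + i h_n)⁻¹ = Im u^{2n-1}` with
`u = w⁻¹ = x / (x - 2i)`, `|u| < 1`. The series is therefore the imaginary part of the
series `2 ∑ u^{2n-1}/(2n-1) = log ((1 + u)/(1 - u))`, and `(1 + u)/(1 - u) = 1 + x i`,
whose argument is `arctan x`.
-/

/-- The pair `(g_{n+1}(x), h_{n+1}(x))` of the two-step iteration with
`g_1(x) = 2/x`, `h_1(x) = 1`,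
`g_n(x) = g_{n-1}(x)(1 - 4/x²) + 4 h_{n-1}(x)/x` and
`h_n(x) = h_{n-1}(x)(1 - 4/x²) - 4 g_{n-1}(x)/x`. -/
noncomputable def gh (x : ℝ) : ℕ → ℝ × ℝ
  | 0 => (2 / x, 1)
  | n + 1 =>
      ((gh x n).1 * (1 - 4 / x ^ 2) + 4 * (gh x n).2 / x,
       (gh x n).2 * (1 - 4 / x ^ 2) - 4 * (gh x n).1 / x)

open Complex

namespace Complex

lemma arg_eq_arctan_of_re_pos {z : ℂ} (hz : 0 < z.re) : z.arg = Real.arctan (z.im / z.re) := by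
  have h := abs_lt.mp (abs_arg_lt_pi_div_two_iff.mpr (Or.inl hz))
  rw [← tan_arg, Real.arctan_tan h.1 h.2]

lemma arg_one_add_mul_I (x : ℝ) : (1 + x * I).arg = Real.arctan x := by
  simpa using arg_eq_arctan_of_re_pos (z := 1 + x * I) (by simp)

lemma neg_one_pow_mul_neg_I_pow_odd (n : ℕ) : (-1) ^ n * (-I) ^ (2 * n + 1) = -I := by
  rw [pow_succ, pow_mul, neg_sq, I_sq, ← mul_assoc, ← mul_pow]
  simp

theorem hasSum_log_one_add_div_one_sub {z : ℂ} (hz : ‖z‖ < 1) :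
    HasSum (fun n : ℕ => 2 * (1 / (2 * (n : ℂ) + 1)) * z ^ (2 * n + 1))
      (log ((1 + z) / (1 - z))) := by
  have hterm : ∀ n : ℕ, 2 * I * ((-1) ^ n * (-I * z) ^ (2 * n + 1) / (2 * n + 1 : ℕ)) =
      2 * (1 / (2 * (n : ℂ) + 1)) * z ^ (2 * n + 1) := by
    intro n
    rw [mul_pow, ← mul_assoc, neg_one_pow_mul_neg_I_pow_odd]
    push_cast
    linear_combination (-2 * z ^ (2 * n + 1) / (2 * n + 1)) * I_sq
  have hvalue : 2 * I * arctan (-I * z) = log ((1 + z) / (1 - z)) := by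
    rw [arctan.eq_1, show -I * z * I = z by linear_combination -z * I_sq]
    linear_combination -log ((1 + z) / (1 - z)) * I_sq
  simpa only [hterm, hvalue] using
    (hasSum_arctan (z := -I * z) (by simpa using hz)).mul_left (2 * I)

end Complex

lemma gh_add_mul_I {x : ℝ} (hx : x ≠ 0) (n : ℕ) :
    ((gh x n).1 : ℂ) + (gh x n).2 * I = I * ((x - 2 * I) / x) ^ (2 * n + 1) := by
  have hx' : (x : ℂ) ≠ 0 := ofReal_ne_zero.mpr hx
  induction n with
  | zero =>
    simp only [gh]
    push_cast
    field_simp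
    linear_combination 2 * I_sq
  | succ n ih =>
    have hsq : ((x - 2 * I) / x) ^ 2 = (1 - 4 / x ^ 2) - 4 / x * I := by
      field_simp
      linear_combination 4 * I_sq
    rw [show 2 * (n + 1) + 1 = (2 * n + 1) + 2 by ring, pow_add, ← mul_assoc, ← ih, hsq]
    simp only [gh]
    push_cast
    linear_combination (4 * (gh x n).2 / x) * I_sq

lemma ofReal_sub_two_mul_I_ne_zero (x : ℝ) : (x - 2 * I : ℂ) ≠ 0 :=
  fun h => by simpa using congrArg im h

lemma norm_div_sub_two_mul_I_lt_one (x : ℝ) : ‖(x / (x - 2 * I) : ℂ)‖ < 1 := by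
  rw [norm_div, div_lt_one (norm_pos_iff.mpr (ofReal_sub_two_mul_I_ne_zero x)), norm_real,
    Real.norm_eq_abs]
  simpa using abs_re_lt_norm (z := x - 2 * I)

lemma one_add_div_one_sub_div_sub_two_mul_I (x : ℝ) :
    (1 + x / (x - 2 * I)) / (1 - x / (x - 2 * I)) = 1 + x * I := by
  have := ofReal_sub_two_mul_I_ne_zero x
  field_simp
  linear_combination 2 * x * I_sq

lemma gh_fst_div_sum_sq {x : ℝ} (hx : x ≠ 0) (n : ℕ) :
    (gh x n).1 / ((gh x n).1 ^ 2 + (gh x n).2 ^ 2) =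
      ((x / (x - 2 * I) : ℂ) ^ (2 * n + 1)).im := by
  set z : ℂ := (gh x n).1 + (gh x n).2 * I with hz
  have hre : z.re = (gh x n).1 := by simp [hz]
  have him : z.im = (gh x n).2 := by simp [hz]
  have hinv : z⁻¹ = -I * (x / (x - 2 * I) : ℂ) ^ (2 * n + 1) := by
    rw [hz, gh_add_mul_I hx, mul_inv, ← inv_pow, inv_div, inv_I]
  calc _ = (z⁻¹).re := by rw [inv_re, normSq_apply, hre, him]; ring
    _ = _ := by simp [hinv]

theorem arctan_iteration_series (x : ℝ) (hx : x ≠ 0) :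
    HasSum (fun n : ℕ =>
      2 * (1 / (2 * (n : ℝ) + 1)) * (gh x n).1 / ((gh x n).1 ^ 2 + (gh x n).2 ^ 2))
      (Real.arctan x) := by
  have hseries := hasSum_im (hasSum_log_one_add_div_one_sub (norm_div_sub_two_mul_I_lt_one x))
  rw [one_add_div_one_sub_div_sub_two_mul_I x, log_im, arg_one_add_mul_I] at hseries
  convert hseries using 2 with n
  rw [mul_div_assoc, gh_fst_div_sum_sq hx, ← im_ofReal_mul]
  push_cast
  rfl
end
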